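/- arXiv:math/0701287 — 4 statements merged into one kernel-verified Lean document; each statement's English description precedes it below -/
import Mathlib

section
/- Let 0 < σ < 1/2. There exist constants C > 0 and c > 0 such that for all integers M ≥ N ≥ 0 and every real number λ ≥ 1, one has p( ω : Σ_{n=N+1}^{M} n^{2(σ−1)} |g_n(ω)|² > λ² ) ≤ C · exp( − c λ² (1+N)^{2(1−σ)} ). -/
/-!
Since `‖gₙ‖² = (hₙ² + lₙ²) / 2`, the sum is a weighted sum `∑ wᵢ Zᵢ²` of independent squares of
real standard Gaussians, with weights `n ^ (-β) / 2`, `β = 2 (1 - σ) > 1`. A Chernoff bound with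
parameter `t = (1 + N) ^ β / 4` applies: `t wᵢ ≤ 1 / 8`, so each factor `𝔼 exp (t wᵢ Zᵢ²) =
(1 - 2 t wᵢ) ^ (-1/2)` is at most `exp (4 t wᵢ)`, and comparison with `∫ x ^ (-β)` gives
`∑_{n > N} n ^ (-β) = O((1 + N) ^ (1 - β))`. The moment generating function is therefore
`exp (O(1 + N))`, which `β > 1` and `λ ≥ 1` let us absorb into `exp (-λ² (1 + N) ^ β / 8)` at the
cost of a constant factor.
-/

open MeasureTheory ProbabilityTheory Real Finset

lemma gaussianPDFReal_mul_exp_mul_sq (s x : ℝ) :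
    gaussianPDFReal 0 1 x * exp (s * x ^ 2) = (√(2 * π))⁻¹ * exp (-(1 / 2 - s) * x ^ 2) := by
  simp only [gaussianPDFReal, NNReal.coe_one, mul_one, sub_zero, mul_assoc, ← exp_add]
  ring_nf

/-- For `s ≥ 1 / 2` both sides are junk zeros. -/
lemma integral_exp_mul_sq_gaussianReal (s : ℝ) :
    ∫ x, exp (s * x ^ 2) ∂gaussianReal 0 1 = √((1 - 2 * s)⁻¹) := by
  simp_rw [integral_gaussianReal_eq_integral_smul one_ne_zero, smul_eq_mul,
    gaussianPDFReal_mul_exp_mul_sq, integral_const_mul, integral_gaussian, ← sqrt_inv,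
    ← sqrt_mul (inv_nonneg.2 (by positivity : (0:ℝ) ≤ 2 * π))]
  congr 1
  field_simp

lemma integral_exp_mul_sq_of_map_eq_gaussianReal {Ω : Type*} [MeasurableSpace Ω]
    {P : Measure Ω} {Z : Ω → ℝ} (hZ : P.map Z = gaussianReal 0 1) (s : ℝ) :
    ∫ ω, exp (s * Z ω ^ 2) ∂P = √((1 - 2 * s)⁻¹) := by
  have hZm : AEMeasurable Z P := aemeasurable_of_map_neZero (by rw [hZ]; infer_instance)
  rw [← integral_exp_mul_sq_gaussianReal s, ← hZ, integral_map hZm (by fun_prop)]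

lemma sqrt_inv_one_sub_two_mul_le_exp {s : ℝ} (hs0 : 0 ≤ s) (hs : s ≤ 1 / 4) :
    √((1 - 2 * s)⁻¹) ≤ exp (4 * s) := by
  have h1 : 1 ≤ (1 - 2 * s)⁻¹ := (one_le_inv₀ (by linarith)).2 (by linarith)
  calc √((1 - 2 * s)⁻¹) ≤ (1 - 2 * s)⁻¹ := sqrt_le_self_iff.2 (.inr h1)
    _ ≤ 1 + 4 * s := by rw [inv_le_iff_one_le_mul₀ (by linarith)]; nlinarith
    _ ≤ exp (4 * s) := by linarith [add_one_le_exp (4 * s)]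

lemma integrable_exp_mul_sq_and_mgf_le {Ω : Type*} [MeasurableSpace Ω] {P : Measure Ω}
    {Z : Ω → ℝ} (hZ : P.map Z = gaussianReal 0 1) {w t : ℝ} (hw : 0 ≤ w) (ht : 0 ≤ t)
    (htw : t * w ≤ 1 / 4) :
    Integrable (fun ω ↦ exp (t * (w * Z ω ^ 2))) P ∧
      mgf (fun ω ↦ w * Z ω ^ 2) P t ≤ exp (4 * (t * w)) := by
  have h := integral_exp_mul_sq_of_map_eq_gaussianReal hZ (t * w)
  have hassoc : ∀ ω, t * (w * Z ω ^ 2) = t * w * Z ω ^ 2 := fun ω ↦ by ring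
  simp only [mgf, hassoc, h]
  -- a non-integrable function would have integral `0`
  refine ⟨.of_integral_ne_zero ?_, sqrt_inv_one_sub_two_mul_le_exp (mul_nonneg ht hw) htw⟩
  rw [h]
  exact (sqrt_pos.2 (inv_pos.2 (by linarith))).ne'

lemma measureReal_ge_sum_mul_sq_le {ι Ω : Type*} [MeasurableSpace Ω] {P : Measure Ω}
    {Z : ι → Ω → ℝ} (hmeas : ∀ i, Measurable (Z i)) (hindep : iIndepFun Z P)
    (hlaw : ∀ i, P.map (Z i) = gaussianReal 0 1) {s : Finset ι} {w : ι → ℝ}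
    (hw : ∀ i ∈ s, 0 ≤ w i) {t : ℝ} (ht : 0 ≤ t) (htw : ∀ i ∈ s, t * w i ≤ 1 / 4) (ε : ℝ) :
    P.real {ω | ε ≤ ∑ i ∈ s, w i * Z i ω ^ 2} ≤ exp (-t * ε + 4 * t * ∑ i ∈ s, w i) := by
  have := hindep.isProbabilityMeasure
  set X : ι → Ω → ℝ := fun i ω ↦ w i * Z i ω ^ 2
  have hXmeas : ∀ i, Measurable (X i) := fun i ↦ by fun_prop
  have hXindep : iIndepFun X P := hindep.comp (fun i x ↦ w i * x ^ 2) (fun i ↦ by fun_prop)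
  have hX (i) (hi : i ∈ s) := integrable_exp_mul_sq_and_mgf_le (hlaw i) (hw i hi) ht (htw i hi)
  have hint := hXindep.integrable_exp_mul_sum hXmeas fun i hi ↦ (hX i hi).1
  have hmgf : mgf (∑ i ∈ s, X i) P t ≤ exp (4 * t * ∑ i ∈ s, w i) := calc
    _ = ∏ i ∈ s, mgf (X i) P t := hXindep.mgf_sum hXmeas s
    _ ≤ ∏ i ∈ s, exp (4 * (t * w i)) :=
      prod_le_prod (fun _ _ ↦ mgf_nonneg) fun i hi ↦ (hX i hi).2
    _ = exp (4 * t * ∑ i ∈ s, w i) := by rw [← exp_sum, mul_sum]; simp only [mul_assoc]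
  calc P.real {ω | ε ≤ ∑ i ∈ s, w i * Z i ω ^ 2}
      = P.real {ω | ε ≤ (∑ i ∈ s, X i) ω} := by simp only [X, Finset.sum_apply]
    _ ≤ exp (-t * ε) * mgf (∑ i ∈ s, X i) P t := measure_ge_le_exp_mul_mgf ε ht hint
    _ ≤ exp (-t * ε) * exp (4 * t * ∑ i ∈ s, w i) := by gcongr
    _ = exp (-t * ε + 4 * t * ∑ i ∈ s, w i) := (exp_add _ _).symm

lemma sum_Ioc_rpow_neg_le {β : ℝ} (hβ : 1 < β) (N M : ℕ) :
    ∑ n ∈ Ioc N M, (n : ℝ) ^ (-β) ≤ 2 ^ β / (β - 1) * ((N : ℝ) + 1) ^ (1 - β) := by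
  rcases lt_or_ge M N with hMN | hNM
  · rw [Ioc_eq_empty_of_le hMN.le, sum_empty]; positivity
  -- shifting `n` to `n + 1` keeps the comparison integral away from the singularity at `0`
  have hshift (n : ℕ) (hn : n ∈ Ioc N M) : (n : ℝ) ^ (-β) ≤ 2 ^ β * ((n + 1 : ℕ) : ℝ) ^ (-β) := by
    have hn1 : (1 : ℝ) ≤ n := Nat.one_le_cast.2 (Nat.one_le_of_lt (mem_Ioc.1 hn).1)
    calc (n : ℝ) ^ (-β) ≤ (((n + 1 : ℕ) : ℝ) / 2) ^ (-β) :=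
          rpow_le_rpow_of_nonpos (by positivity) (by push_cast; linarith) (by linarith)
      _ = 2 ^ β * ((n + 1 : ℕ) : ℝ) ^ (-β) := by
          rw [div_rpow (by positivity) zero_le_two, rpow_neg zero_le_two, div_inv_eq_mul, mul_comm]
  have hint : ∑ n ∈ Ico (N + 1) (M + 1), ((n + 1 : ℕ) : ℝ) ^ (-β)
      ≤ ∫ x in ((N + 1 : ℕ) : ℝ)..((M + 1 : ℕ) : ℝ), x ^ (-β) :=
    AntitoneOn.sum_le_integral_Ico (by omega) <|
      (antitoneOn_rpow_Ioi_of_exponent_nonpos (by linarith)).mono fun x hx ↦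
        lt_of_lt_of_le (by positivity) hx.1
  rw [integral_rpow (.inr ⟨by linarith, Set.notMem_uIcc_of_lt (by positivity) (by positivity)⟩),
    Ico_add_one_add_one_eq_Ioc] at hint
  calc ∑ n ∈ Ioc N M, (n : ℝ) ^ (-β) ≤ 2 ^ β * ∑ n ∈ Ioc N M, ((n + 1 : ℕ) : ℝ) ^ (-β) := by
        rw [mul_sum]; exact sum_le_sum hshift
    _ ≤ 2 ^ β * ((((M + 1 : ℕ) : ℝ) ^ (-β + 1) - ((N + 1 : ℕ) : ℝ) ^ (-β + 1)) / (-β + 1)) := by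
        gcongr
    _ = 2 ^ β / (β - 1) * (((N : ℝ) + 1) ^ (1 - β) - ((M : ℝ) + 1) ^ (1 - β)) := by
        push_cast
        rw [neg_add_eq_sub]
        field_simp [(by linarith : β - 1 ≠ 0), (by linarith : 1 - β ≠ 0)]
        ring
    _ ≤ 2 ^ β / (β - 1) * ((N : ℝ) + 1) ^ (1 - β) := by
        gcongr
        exact sub_le_self _ (by positivity)

lemma exists_mul_le_add_mul_rpow {K ε β : ℝ} (hK : 0 ≤ K) (hε : 0 < ε) (hβ : 1 < β) :
    ∃ C, ∀ x : ℝ, 0 ≤ x → K * x ≤ C + ε * x ^ β := by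
  set D := (K / ε) ^ (β - 1)⁻¹
  have hD : 0 ≤ D := by positivity
  refine ⟨K * D, fun x hx ↦ ?_⟩
  rcases le_total x D with hxD | hDx
  · have : 0 ≤ ε * x ^ β := by positivity
    nlinarith
  · have hpow : K / ε ≤ x ^ (β - 1) := by
      rw [← rpow_inv_rpow (by positivity : 0 ≤ K / ε) (by linarith : β - 1 ≠ 0)]
      exact rpow_le_rpow hD hDx (by linarith)
    have hxβ : x ^ β = x ^ (β - 1) * x := by
      rw [← rpow_add_one' hx (by linarith), sub_add_cancel]
    rw [div_le_iff₀ hε] at hpow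
    have : 0 ≤ K * D := by positivity
    nlinarith

lemma measureReal_ge_sum_Ioc_rpow_neg_mul_le {Ω : Type*} [MeasurableSpace Ω] {P : Measure Ω}
    {Z : ℕ ⊕ ℕ → Ω → ℝ} (hmeas : ∀ i, Measurable (Z i)) (hindep : iIndepFun Z P)
    (hlaw : ∀ i, P.map (Z i) = gaussianReal 0 1) {β : ℝ} (hβ : 1 < β) (N M : ℕ) (ε : ℝ) :
    P.real {ω | ε ≤ ∑ n ∈ Ioc N M, (n : ℝ) ^ (-β) * ((Z (.inl n) ω ^ 2 + Z (.inr n) ω ^ 2) / 2)}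
      ≤ exp (-(((N : ℝ) + 1) ^ β / 4) * ε + 2 ^ β / (β - 1) * ((N : ℝ) + 1)) := by
  set x : ℝ := N + 1
  have hx : 0 < x := by positivity
  set w : ℕ ⊕ ℕ → ℝ := Sum.elim (fun n ↦ (n : ℝ) ^ (-β) / 2) (fun n ↦ (n : ℝ) ^ (-β) / 2)
  set s := (Ioc N M).disjSum (Ioc N M)
  have hw : ∀ i ∈ s, 0 ≤ w i := by
    intro i _; rcases i with n | n <;> simp only [w, Sum.elim_inl, Sum.elim_inr] <;> positivity
  have htw : ∀ i ∈ s, x ^ β / 4 * w i ≤ 1 / 4 := by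
    have key (n : ℕ) (hn : n ∈ Ioc N M) : x ^ β / 4 * ((n : ℝ) ^ (-β) / 2) ≤ 1 / 4 := by
      have hxn : x ≤ n := by simp only [x]; exact_mod_cast (mem_Ioc.1 hn).1
      have : (n : ℝ) ^ (-β) ≤ x ^ (-β) := rpow_le_rpow_of_nonpos hx hxn (by linarith)
      have : x ^ β * x ^ (-β) = 1 := by rw [rpow_neg hx.le, mul_inv_cancel₀ (by positivity)]
      have : 0 ≤ x ^ β := by positivity
      nlinarith
    intro i hi
    rcases mem_disjSum.1 hi with ⟨n, hn, rfl⟩ | ⟨n, hn, rfl⟩ <;> exact key n hn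
  have hsum : 4 * (x ^ β / 4) * ∑ i ∈ s, w i ≤ 2 ^ β / (β - 1) * x := by
    have hxx : x ^ β * x ^ (1 - β) = x := by
      rw [← rpow_add hx, add_sub_cancel, rpow_one]
    simp only [s, w, sum_disjSum, Sum.elim_inl, Sum.elim_inr, ← sum_add_distrib, add_halves]
    calc 4 * (x ^ β / 4) * ∑ n ∈ Ioc N M, (n : ℝ) ^ (-β)
        ≤ x ^ β * (2 ^ β / (β - 1) * x ^ (1 - β)) := by
          rw [mul_div_cancel₀ _ four_ne_zero]; gcongr; exact sum_Ioc_rpow_neg_le hβ N M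
      _ = 2 ^ β / (β - 1) * x := by rw [mul_left_comm, hxx]
  have hZ : ∀ ω, ∑ n ∈ Ioc N M, (n : ℝ) ^ (-β) * ((Z (.inl n) ω ^ 2 + Z (.inr n) ω ^ 2) / 2)
      = ∑ i ∈ s, w i * Z i ω ^ 2 := fun ω ↦ by
    simp only [s, w, sum_disjSum, Sum.elim_inl, Sum.elim_inr, ← sum_add_distrib]
    congr 1; ext n; ring
  simp only [hZ]
  refine (measureReal_ge_sum_mul_sq_le hmeas hindep hlaw hw (by positivity) htw ε).trans ?_
  gcongr

lemma norm_add_I_mul_div_sqrt_two_sq (a b : ℝ) :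
    ‖((a : ℂ) + Complex.I * b) / Real.sqrt 2‖ ^ 2 = (a ^ 2 + b ^ 2) / 2 := by
  rw [norm_div, Complex.norm_real, norm_of_nonneg (sqrt_nonneg 2), mul_comm Complex.I,
    Complex.norm_add_mul_I, div_pow, sq_sqrt (by positivity), sq_sqrt zero_le_two]

theorem stmt5_general
    {Ω : Type*} [MeasurableSpace Ω] (P : Measure Ω) [IsProbabilityMeasure P]
    (h l : ℕ → Ω → ℝ) (g : ℕ → Ω → ℂ)
    (hmh : ∀ n, Measurable (h n)) (hml : ∀ n, Measurable (l n))
    (hindep : iIndepFun (β := fun _ : ℕ ⊕ ℕ => ℝ)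
      (Sum.elim h l) P)
    (hdh : ∀ n, P.map (h n) = gaussianReal 0 1)
    (hdl : ∀ n, P.map (l n) = gaussianReal 0 1)
    (hg : ∀ n ω, g n ω = (h n ω + Complex.I * l n ω) / Real.sqrt 2)
    (σ : ℝ) (hσ : σ < 1/2) :
    ∃ C c : ℝ, 0 < C ∧ 0 < c ∧ ∀ N M : ℕ, N ≤ M → ∀ lam : ℝ, 1 ≤ lam →
      P {ω | lam ^ 2 < ∑ n ∈ Finset.Ioc N M, (n : ℝ) ^ (2 * (σ - 1)) * ‖g n ω‖ ^ 2} ≤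
        ENNReal.ofReal (C * Real.exp (-c * lam ^ 2 * ((1 : ℝ) + N) ^ (2 * (1 - σ)))) := by
  set β := 2 * (1 - σ)
  have hβ : 1 < β := by linarith
  obtain ⟨C, hC⟩ := exists_mul_le_add_mul_rpow (K := 2 ^ β / (β - 1)) (by positivity)
    (by norm_num : (0 : ℝ) < 1 / 8) hβ
  refine ⟨exp C, 1 / 8, exp_pos C, by norm_num, fun N M _ lam hlam ↦ ?_⟩
  have htail := measureReal_ge_sum_Ioc_rpow_neg_mul_le (Z := Sum.elim h l)
    (by rintro (n | n); exacts [hmh n, hml n]) hindep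
    (by rintro (n | n); exacts [hdh n, hdl n]) hβ N M (lam ^ 2)
  have hsum (ω : Ω) : ∑ n ∈ Ioc N M, (n : ℝ) ^ (2 * (σ - 1)) * ‖g n ω‖ ^ 2
      = ∑ n ∈ Ioc N M, (n : ℝ) ^ (-β) * ((Sum.elim h l (.inl n) ω ^ 2
        + Sum.elim h l (.inr n) ω ^ 2) / 2) := by
    simp only [hg, norm_add_I_mul_div_sqrt_two_sq, Sum.elim_inl, Sum.elim_inr, β]
    ring_nf
  have habsorb := hC ((N : ℝ) + 1) (by positivity)
  rw [add_comm (1 : ℝ)]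
  have hlam2 : 1 ≤ lam ^ 2 := by nlinarith
  calc P {ω | lam ^ 2 < ∑ n ∈ Ioc N M, (n : ℝ) ^ (2 * (σ - 1)) * ‖g n ω‖ ^ 2}
      ≤ P {ω | lam ^ 2 ≤ ∑ n ∈ Ioc N M, (n : ℝ) ^ (-β) * ((Sum.elim h l (.inl n) ω ^ 2
        + Sum.elim h l (.inr n) ω ^ 2) / 2)} :=
        measure_mono fun ω hω ↦ (hω.trans_eq (hsum ω)).le
    _ ≤ ENNReal.ofReal (exp C * exp (-(1 / 8) * lam ^ 2 * ((N : ℝ) + 1) ^ β)) := by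
      rw [ENNReal.le_ofReal_iff_toReal_le (measure_ne_top _ _) (by positivity), ← exp_add]
      refine htail.trans (exp_le_exp.2 ?_)
      have : 0 ≤ ((N : ℝ) + 1) ^ β := by positivity
      nlinarith

/-- Gaussian tail estimate for Sobolev norms of tails of random series:
for `0 < σ < 1/2` there exist `C, c > 0` such that for all integers `M ≥ N ≥ 0`
and every `λ ≥ 1`,
`p(ω : ∑_{n=N+1}^{M} n^{2(σ-1)} |gₙ(ω)|² > λ²) ≤ C exp(-c λ² (1+N)^{2(1-σ)})`,
where `(gₙ)` are i.i.d. standard complex Gaussians. -/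
theorem stmt5
    {Ω : Type*} [MeasurableSpace Ω] (P : Measure Ω) [IsProbabilityMeasure P]
    (h l : ℕ → Ω → ℝ) (g : ℕ → Ω → ℂ)
    (hmh : ∀ n, Measurable (h n)) (hml : ∀ n, Measurable (l n))
    (hindep : iIndepFun (β := fun _ : ℕ ⊕ ℕ => ℝ)
      (Sum.elim h l) P)
    (hdh : ∀ n, P.map (h n) = gaussianReal 0 1)
    (hdl : ∀ n, P.map (l n) = gaussianReal 0 1)
    (hg : ∀ n ω, g n ω = (h n ω + Complex.I * l n ω) / Real.sqrt 2)
    (σ : ℝ) (hσ0 : 0 < σ) (hσ : σ < 1/2) :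
    ∃ C c : ℝ, 0 < C ∧ 0 < c ∧ ∀ N M : ℕ, N ≤ M → ∀ lam : ℝ, 1 ≤ lam →
      P {ω | lam ^ 2 < ∑ n ∈ Finset.Ioc N M, (n : ℝ) ^ (2 * (σ - 1)) * ‖g n ω‖ ^ 2} ≤
        ENNReal.ofReal (C * Real.exp (-c * lam ^ 2 * ((1 : ℝ) + N) ^ (2 * (1 - σ)))) :=
  stmt5_general P h l g hmh hml hindep hdh hdl hg σ hσ
end

section
/- For every σ ∈ (0, 1/2) there exist β < 1 and C > 0 such that for every real number α one has Σ_{n=1}^∞ n^{2σ} / (1 + |n² − α|)^β ≤ C (1 + |α|)^σ. (Any β with 1/2 + σ < β < 1 works.) -/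
/-!
Write `β = σ + γ` with `1/2 < γ < 1 - σ`. Since `n² ≤ (1 + |α|)(1 + |n² - α|)`, each term is at
most `(1 + |α|)^σ (1 + |n² - α|)^(-γ)`. If `m` is the integer part of `√α` (or `0` for `α ≤ 0`),
then `|n² - α| ≥ (n - √α)²`, so `1 + |n² - α|` is comparable to `1 + (n - m)²`; hence the
remaining sum is bounded, uniformly in `α`, by `3^γ ∑_{z ∈ ℤ} (1 + z²)^(-γ)`, which converges
because `2γ > 1`.
-/

open Real

lemma sq_sub_le_abs_sq_sub_sq {x s : ℝ} (hx : 0 ≤ x) (hs : 0 ≤ s) :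
    (x - s) ^ 2 ≤ |x ^ 2 - s ^ 2| := by
  have h : |x - s| ≤ x + s := abs_sub_le_iff.2 ⟨by linarith, by linarith⟩
  rw [show x ^ 2 - s ^ 2 = (x - s) * (x + s) by ring, abs_mul, abs_of_nonneg (add_nonneg hx hs),
    ← sq_abs, sq]
  exact mul_le_mul_of_nonneg_left h (abs_nonneg _)

lemma exists_int_one_add_sq_sub_le (α : ℝ) :
    ∃ m : ℤ, ∀ x : ℝ, 0 ≤ x → 1 + (x - m) ^ 2 ≤ 3 * (1 + |x ^ 2 - α|) := by
  set s := √(max α 0)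
  have hs : 0 ≤ s := sqrt_nonneg _
  have hs2 : s ^ 2 = max α 0 := sq_sqrt (le_max_right _ _)
  refine ⟨⌊s⌋, fun x hx => ?_⟩
  have hfloor : 0 ≤ s - ⌊s⌋ ∧ s - ⌊s⌋ < 1 :=
    ⟨by linarith [Int.floor_le s], by linarith [Int.lt_floor_add_one s]⟩
  have hnear : (x - s) ^ 2 ≤ |x ^ 2 - α| := by
    refine (sq_sub_le_abs_sq_sub_sq hx hs).trans ?_
    rw [hs2]
    rcases le_total α 0 with h | h
    · rw [max_eq_right h, sub_zero, abs_of_nonneg (sq_nonneg x), abs_of_nonneg (by nlinarith)]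
      linarith
    · rw [max_eq_left h]
  nlinarith [sq_nonneg (x - s - (s - ⌊s⌋))]

lemma summable_one_add_sq_rpow_neg {γ : ℝ} (hγ : 1 / 2 < γ) :
    Summable fun z : ℤ => (1 + (z : ℝ) ^ 2) ^ (-γ) := by
  refine (summable_abs_int_rpow (b := 2 * γ) (by linarith)).of_norm_bounded_eventually ?_
  filter_upwards [(Set.finite_singleton (0 : ℤ)).compl_mem_cofinite] with z hz
  have hz : (0 : ℝ) < (z : ℝ) ^ 2 := by
    have : (z : ℝ) ≠ 0 := Int.cast_ne_zero.2 hz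
    positivity
  have hpow : |(z : ℝ)| ^ (-(2 * γ)) = ((z : ℝ) ^ 2) ^ (-γ) := by
    rw [← sq_abs, ← rpow_natCast, ← rpow_mul (abs_nonneg _)]
    ring_nf
  rw [norm_of_nonneg (by positivity), hpow]
  exact rpow_le_rpow_of_nonpos hz (by linarith) (by linarith)

lemma rpow_two_mul_le_mul_rpow {x σ : ℝ} (hx : 0 ≤ x) (hσ : 0 ≤ σ) (α : ℝ) :
    x ^ (2 * σ) ≤ (1 + |α|) ^ σ * (1 + |x ^ 2 - α|) ^ σ := by
  have hsq : x ^ 2 ≤ (1 + |α|) * (1 + |x ^ 2 - α|) := by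
    nlinarith [le_abs_self (x ^ 2 - α), le_abs_self α,
      mul_nonneg (abs_nonneg α) (abs_nonneg (x ^ 2 - α))]
  rw [← mul_rpow (by positivity) (by positivity), rpow_mul hx, rpow_two]
  exact rpow_le_rpow (by positivity) hsq hσ

lemma rpow_div_one_add_abs_sq_sub_le {x y σ γ : ℝ} (hx : 0 ≤ x) (hσ : 0 ≤ σ) (hγ : 0 ≤ γ)
    {α : ℝ} (hy : 1 + y ^ 2 ≤ 3 * (1 + |x ^ 2 - α|)) :
    x ^ (2 * σ) / (1 + |x ^ 2 - α|) ^ (σ + γ) ≤ 3 ^ γ * (1 + |α|) ^ σ * (1 + y ^ 2) ^ (-γ) := by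
  set d := 1 + |x ^ 2 - α|
  have hd : 0 < d := by positivity
  have hdecay : d ^ (-γ) ≤ 3 ^ γ * (1 + y ^ 2) ^ (-γ) := by
    calc d ^ (-γ) ≤ ((1 + y ^ 2) / 3) ^ (-γ) :=
          rpow_le_rpow_of_nonpos (by positivity) (by linarith) (by linarith)
      _ = 3 ^ γ * (1 + y ^ 2) ^ (-γ) := by
          rw [div_rpow (by positivity) (by norm_num), rpow_neg (by norm_num : (0:ℝ) ≤ 3)]
          field_simp
  calc x ^ (2 * σ) / d ^ (σ + γ) = x ^ (2 * σ) / d ^ σ * d ^ (-γ) := by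
        rw [rpow_add hd, rpow_neg hd.le, div_mul_eq_div_div, div_eq_mul_inv _ (d ^ γ)]
    _ ≤ (1 + |α|) ^ σ * (3 ^ γ * (1 + y ^ 2) ^ (-γ)) := by
        gcongr
        exact div_le_of_le_mul₀ (by positivity) (by positivity) (rpow_two_mul_le_mul_rpow hx hσ α)
    _ = 3 ^ γ * (1 + |α|) ^ σ * (1 + y ^ 2) ^ (-γ) := by ring

/-- For every `σ ∈ (0, 1/2)` there exist `β < 1` and `C > 0` such that for every
real `α`, the series `∑_{n≥1} n^{2σ} / (1 + |n² - α|)^β` converges and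
`∑_{n≥1} n^{2σ} / (1 + |n² - α|)^β ≤ C (1 + |α|)^σ`. -/
theorem stmt7 (σ : ℝ) (hσ0 : 0 < σ) (hσ : σ < 1/2) :
    ∃ β C : ℝ, β < 1 ∧ 0 < C ∧ ∀ α : ℝ,
      Summable (fun n : ℕ+ => (n : ℝ) ^ (2 * σ) / (1 + |(n : ℝ) ^ 2 - α|) ^ β) ∧
      ∑' n : ℕ+, (n : ℝ) ^ (2 * σ) / (1 + |(n : ℝ) ^ 2 - α|) ^ β
        ≤ C * (1 + |α|) ^ σ := by
  obtain ⟨γ, hγ, hβ⟩ : ∃ γ : ℝ, 1 / 2 < γ ∧ σ + γ < 1 := ⟨3 / 4 - σ / 2, by linarith, by linarith⟩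
  set G : ℤ → ℝ := fun z => (1 + (z : ℝ) ^ 2) ^ (-γ)
  have hG : Summable G := summable_one_add_sq_rpow_neg hγ
  have hG0 : ∀ z, 0 ≤ G z := fun z => by positivity
  refine ⟨σ + γ, 3 ^ γ * ∑' z, G z, hβ,
    mul_pos (by positivity) (hG.tsum_pos hG0 0 (by positivity)), fun α => ?_⟩
  obtain ⟨m, hm⟩ := exists_int_one_add_sq_sub_le α
  have hinj : Function.Injective fun n : ℕ+ => (n : ℤ) - m :=
    fun a b h => PNat.coe_injective (by simpa using h)
  have hterm (n : ℕ+) : (n : ℝ) ^ (2 * σ) / (1 + |(n : ℝ) ^ 2 - α|) ^ (σ + γ)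
      ≤ 3 ^ γ * (1 + |α|) ^ σ * G ((n : ℤ) - m) := by
    refine rpow_div_one_add_abs_sq_sub_le (by positivity) hσ0.le (by linarith) ?_
    exact_mod_cast hm n (by positivity)
  have hmajorant := (hG.comp_injective hinj).mul_left (3 ^ γ * (1 + |α|) ^ σ)
  have hsum := Summable.of_nonneg_of_le (fun n => by positivity) hterm hmajorant
  refine ⟨hsum, ?_⟩
  calc _ ≤ ∑' n : ℕ+, 3 ^ γ * (1 + |α|) ^ σ * G ((n : ℤ) - m) :=
        hsum.tsum_le_tsum hterm hmajorant
    _ ≤ 3 ^ γ * (1 + |α|) ^ σ * ∑' z, G z := by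
        rw [tsum_mul_left]
        gcongr
        exact tsum_comp_le_tsum_of_inj hG hG0 hinj
    _ = 3 ^ γ * (∑' z, G z) * (1 + |α|) ^ σ := by ring
end

section
/- For all positive integers n, n₁, n₂, n₃, define γ(n, n₁, n₂, n₃) = (4/π²) ∫₀^π [ sin(nθ) sin(n₁θ) sin(n₂θ) sin(n₃θ) / sin²θ ] dθ. Then 0 ≤ γ(n, n₁, n₂, n₃) ≤ (2/π) · min(n, n₁, n₂, n₃). -/
/-!
Dividing `sin (a θ) sin (b θ)` by `sin θ` gives the trigonometric polynomial
`∑ sin (m θ)` over `m = |a - b| + 1, |a - b| + 3, …, a + b - 1` (a telescoping sum), so the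
integrand is a product of two such sine sums. By orthogonality of `sin (m θ)` on `[0, π]`, the
integral is `π / 2` times the number of frequencies the two sums share, which is at most
`min (min n n₁) (min n₂ n₃)`.
-/

open Real Finset MeasureTheory

theorem integral_cos_int_mul_eq_zero {c : ℤ} (hc : c ≠ 0) :
    ∫ θ in (0 : ℝ)..π, cos (c * θ) = 0 := by
  rw [intervalIntegral.integral_comp_mul_left (fun x => cos x) (Int.cast_ne_zero.mpr hc)]
  simp [integral_cos, sin_int_mul_pi]

theorem integral_sin_natCast_mul_mul_sin_natCast_mul {m l : ℕ} (hm : m ≠ 0) :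
    ∫ θ in (0 : ℝ)..π, sin (m * θ) * sin (l * θ) = if m = l then π / 2 else 0 := by
  have product_to_sum : ∀ θ : ℝ, sin (m * θ) * sin (l * θ)
      = (cos (((m - l : ℤ) : ℝ) * θ) - cos (((m + l : ℤ) : ℝ) * θ)) / 2 := fun θ => by
    push_cast
    rw [sub_mul, add_mul, ← two_mul_sin_mul_sin]
    ring
  simp_rw [product_to_sum]
  rw [intervalIntegral.integral_div,
    intervalIntegral.integral_sub (Continuous.intervalIntegrable (by fun_prop) _ _)
      (Continuous.intervalIntegrable (by fun_prop) _ _),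
    integral_cos_int_mul_eq_zero (c := m + l) (by omega)]
  split_ifs with h
  · simp [h]
  · rw [integral_cos_int_mul_eq_zero (c := m - l) (by omega)]
    simp

theorem integral_sum_sin_mul_sum_sin {F G : Finset ℕ} (hF : 0 ∉ F) :
    ∫ θ in (0 : ℝ)..π, (∑ m ∈ F, sin (m * θ)) * (∑ l ∈ G, sin (l * θ))
      = π / 2 * #(F ∩ G) := by
  simp_rw [sum_mul_sum]
  rw [intervalIntegral.integral_finsetSum fun _ _ =>
    Continuous.intervalIntegrable (by fun_prop) _ _]
  have orthogonality : ∀ m ∈ F,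
      ∫ θ in (0 : ℝ)..π, ∑ l ∈ G, sin (m * θ) * sin (l * θ)
        = if m ∈ G then π / 2 else 0 := fun m hm => by
    rw [intervalIntegral.integral_finsetSum fun _ _ =>
      Continuous.intervalIntegrable (by fun_prop) _ _]
    simp_rw [integral_sin_natCast_mul_mul_sin_natCast_mul (ne_of_mem_of_not_mem hm hF)]
    exact sum_ite_eq G m fun _ => π / 2
  rw [sum_congr rfl orthogonality, ← sum_filter, filter_mem_eq_inter, sum_const, nsmul_eq_mul,
    mul_comm]

def sinProductFreqs (a b : ℕ) : Finset ℕ :=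
  (range (min a b)).image fun k => max a b - min a b + 1 + 2 * k

theorem sinProductFreqs_comm (a b : ℕ) : sinProductFreqs a b = sinProductFreqs b a := by
  rw [sinProductFreqs, sinProductFreqs, min_comm, max_comm]

theorem card_sinProductFreqs (a b : ℕ) : #(sinProductFreqs a b) = min a b := by
  rw [sinProductFreqs, card_image_of_injective _ fun x y h => by omega, card_range]

theorem zero_notMem_sinProductFreqs (a b : ℕ) : 0 ∉ sinProductFreqs a b := by
  simp [sinProductFreqs]

theorem sin_mul_sin_eq_sin_mul_sum_sinProductFreqs (a b : ℕ) (θ : ℝ) :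
    sin (a * θ) * sin (b * θ) = sin θ * ∑ m ∈ sinProductFreqs a b, sin (m * θ) := by
  wlog hab : a ≤ b generalizing a b
  · rw [mul_comm, sinProductFreqs_comm, this b a (by omega)]
  set c : ℝ := ((b - a : ℕ) : ℝ)
  set g : ℕ → ℝ := fun k => cos ((c + 2 * k) * θ) / 2
  have telescoping : ∀ k,
      sin θ * sin (((b - a + 1 + 2 * k : ℕ) : ℝ) * θ) = g k - g (k + 1) := by
    intro k
    have h := two_mul_sin_mul_sin ((c + 1 + 2 * k) * θ) θ
    rw [show (c + 1 + 2 * k) * θ - θ = (c + 2 * k) * θ by ring,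
      show (c + 1 + 2 * k) * θ + θ = (c + 2 * (k + 1 : ℕ)) * θ by push_cast; ring] at h
    simp only [g]
    push_cast at h ⊢
    linarith
  rw [sinProductFreqs, min_eq_left hab, max_eq_right hab,
    sum_image (fun x _ y _ h => by omega), mul_sum, sum_congr rfl fun k _ => telescoping k,
    sum_range_sub']
  have hc : c = b - a := Nat.cast_sub hab
  simp only [g, hc]
  rw [Nat.cast_zero, show ((b : ℝ) - a + 2 * 0) * θ = b * θ - a * θ by ring,
    show ((b : ℝ) - a + 2 * a) * θ = b * θ + a * θ by ring]
  linarith [two_mul_sin_mul_sin (b * θ) (a * θ)]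

theorem integral_sin_mul_sin_mul_sin_mul_sin_div_sin_sq (a b c d : ℕ) :
    ∫ θ in (0 : ℝ)..π, sin (a * θ) * sin (b * θ) * sin (c * θ) * sin (d * θ) / sin θ ^ 2
      = π / 2 * #(sinProductFreqs a b ∩ sinProductFreqs c d) := by
  rw [← integral_sum_sin_mul_sum_sin (zero_notMem_sinProductFreqs a b)]
  simp only [intervalIntegral.integral_of_le pi_pos.le, integral_Ioc_eq_integral_Ioo]
  refine setIntegral_congr_fun measurableSet_Ioo fun θ hθ => ?_
  have hsin : sin θ ≠ 0 := (sin_pos_of_pos_of_lt_pi hθ.1 hθ.2).ne'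
  rw [div_eq_iff (pow_ne_zero 2 hsin), mul_assoc _ (sin (c * θ)),
    sin_mul_sin_eq_sin_mul_sum_sinProductFreqs a b,
    sin_mul_sin_eq_sin_mul_sum_sinProductFreqs c d]
  ring

theorem stmt9_general (n n₁ n₂ n₃ : ℕ) :
    (0 ≤ (4 / Real.pi ^ 2) *
        ∫ θ in (0 : ℝ)..Real.pi,
          Real.sin (n * θ) * Real.sin (n₁ * θ) * Real.sin (n₂ * θ) * Real.sin (n₃ * θ)
            / Real.sin θ ^ 2) ∧
    ((4 / Real.pi ^ 2) *
        ∫ θ in (0 : ℝ)..Real.pi,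
          Real.sin (n * θ) * Real.sin (n₁ * θ) * Real.sin (n₂ * θ) * Real.sin (n₃ * θ)
            / Real.sin θ ^ 2)
      ≤ (2 / Real.pi) * (min n (min n₁ (min n₂ n₃)) : ℕ) := by
  set overlap := #(sinProductFreqs n n₁ ∩ sinProductFreqs n₂ n₃)
  have overlap_le_left : overlap ≤ min n n₁ :=
    card_sinProductFreqs n n₁ ▸ card_le_card inter_subset_left
  have overlap_le_right : overlap ≤ min n₂ n₃ :=
    card_sinProductFreqs n₂ n₃ ▸ card_le_card inter_subset_right
  rw [integral_sin_mul_sin_mul_sin_mul_sin_div_sin_sq,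
    show 4 / π ^ 2 * (π / 2 * overlap) = 2 / π * (overlap : ℝ) by field_simp; ring]
  exact ⟨by positivity, by gcongr; omega⟩

/-- Bounds for the fourth-order product coefficient of zonal spherical harmonics on `S³`:
for positive integers `n, n₁, n₂, n₃`, the quantity
`γ(n,n₁,n₂,n₃) = (4/π²) ∫₀^π sin(nθ) sin(n₁θ) sin(n₂θ) sin(n₃θ) / sin²θ dθ`
satisfies `0 ≤ γ(n,n₁,n₂,n₃) ≤ (2/π) min(n,n₁,n₂,n₃)`. -/
theorem stmt9 (n n₁ n₂ n₃ : ℕ) (hn : 1 ≤ n) (h1 : 1 ≤ n₁) (h2 : 1 ≤ n₂) (h3 : 1 ≤ n₃) :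
    (0 ≤ (4 / Real.pi ^ 2) *
        ∫ θ in (0 : ℝ)..Real.pi,
          Real.sin (n * θ) * Real.sin (n₁ * θ) * Real.sin (n₂ * θ) * Real.sin (n₃ * θ)
            / Real.sin θ ^ 2) ∧
    ((4 / Real.pi ^ 2) *
        ∫ θ in (0 : ℝ)..Real.pi,
          Real.sin (n * θ) * Real.sin (n₁ * θ) * Real.sin (n₂ * θ) * Real.sin (n₃ * θ)
            / Real.sin θ ^ 2)
      ≤ (2 / Real.pi) * (min n (min n₁ (min n₂ n₃)) : ℕ) :=
  stmt9_general n n₁ n₂ n₃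
end

section
/- For every σ ∈ (0, 1/2) there exists β ∈ (0, 1) such that the quadruple sum Σ_{(n,n₁,n₂,n₃) ∈ ℕ⁴} n^{2σ} · ( min(n₁,n₂,n₃) )² / [ (1 + |n² − n₁² + n₂² − n₃²|)^β · (n₁ n₂ n₃)² ] is finite, where the sum runs over all quadruples of positive integers. -/
/-!
Any `β ∈ (σ + 1/2, 1)` works. For fixed `(n₁, n₂, n₃)` put `c = n₁² - n₂² + n₃²`. The sum
over `n` of `n^{2σ} / (1 + |n² - c|)^β` is `O((1 + |c|)^δ)` with `δ = σ + (1 - β)/2`: for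
`n² > 2|c|` the denominator is at least `(n²/2)^β`, which is summable against `n^{2σ}` as
`β > σ + 1/2`; the `L ≍ √|c|` remaining values `|n² - c|` are distinct on either side of `c`,
so their contribution is at most `L^{2σ} · 2 ∑_{k < L} (k + 1)^{-β} ≲ L^{2σ + 1 - β}`.
With `M = max nᵢ` and `m = min nᵢ` we have `1 + |c| ≤ 3M²` and `m² M ≤ n₁n₂n₃ ≤ M³`; as `δ < 1/2`
the remaining sum over `(n₁, n₂, n₃)` is dominated by `∑ (n₁n₂n₃)^{(2δ - 4)/3}`, which converges.
-/

open Finset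

section Counting

variable {M : Type*} [AddCommMonoid M] [PartialOrder M] [IsOrderedAddMonoid M] {h : ℕ → M}

theorem Finset.sum_le_sum_range_card_of_antitone (hh : Antitone h) (t : Finset ℕ) :
    ∑ k ∈ t, h k ≤ ∑ k ∈ range #t, h k := by
  induction t using Finset.induction_on_max with
  | empty => simp
  | insert a t ha ih =>
    have hat : a ∉ t := fun h => lt_irrefl a (ha a h)
    have hcard : #t ≤ a := by
      simpa using card_le_card (fun x hx => mem_range.2 (ha x hx) : t ⊆ range a)
    rw [sum_insert hat, card_insert_of_notMem hat, sum_range_succ, add_comm]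
    exact add_le_add ih (hh hcard)

theorem Finset.sum_comp_le_sum_range_card_of_antitone {ι : Type*} (hh : Antitone h)
    {s : Finset ι} {f : ι → ℕ} (hf : Set.InjOn f s) :
    ∑ i ∈ s, h (f i) ≤ ∑ k ∈ range #s, h k := by
  classical
  rw [← sum_image hf, ← card_image_of_injOn hf]
  exact sum_le_sum_range_card_of_antitone hh _

theorem Finset.sum_natAbs_sub_le_two_nsmul {ι : Type*} (hh : Antitone h) (h0 : 0 ≤ h)
    {s : Finset ι} {g : ι → ℤ} (hg : Set.InjOn g s) (c : ℤ) :
    ∑ i ∈ s, h (g i - c).natAbs ≤ 2 • ∑ k ∈ range #s, h k := by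
  have side (p : ℤ → Prop) [DecidablePred p] (hp : ∀ x y, p x → p y →
      (x - c).natAbs = (y - c).natAbs → x = y) :
      ∑ i ∈ s with p (g i), h (g i - c).natAbs ≤ ∑ k ∈ range #s, h k := by
    refine (sum_comp_le_sum_range_card_of_antitone hh fun i hi j hj hij => ?_).trans
      (sum_le_sum_of_subset_of_nonneg (range_subset_range.2 (card_filter_le _ _))
        fun k _ _ => h0 k)
    simp only [coe_filter, Set.mem_ofPred_eq] at hi hj
    exact hg hi.1 hj.1 (hp _ _ hi.2 hj.2 hij)
  rw [← sum_filter_add_sum_filter_not s (fun i => c ≤ g i), two_nsmul]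
  exact add_le_add (side (c ≤ ·) fun x y hx hy hxy => by omega)
    (side (¬ c ≤ ·) fun x y hx hy hxy => by omega)

end Counting

theorem Real.mul_rpow_sub_one_le_rpow_sub_rpow {p x : ℝ} (hp0 : 0 ≤ p) (hp1 : p ≤ 1) (hx : 0 ≤ x) :
    p * (x + 1) ^ (p - 1) ≤ (x + 1) ^ p - x ^ p := by
  have hx1 : 0 < x + 1 := by linarith
  have amgm := Real.geom_mean_le_arith_mean2_weighted hp0 (sub_nonneg.2 hp1) hx hx1.le
    (add_sub_cancel p 1)
  have hxp : x ^ p = x ^ p * (x + 1) ^ (1 - p) * (x + 1) ^ (p - 1) := by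
    rw [mul_assoc, ← Real.rpow_add hx1]; simp
  have hx1p : (x + 1) ^ p = (x + 1) * (x + 1) ^ (p - 1) := by
    rw [Real.rpow_sub_one hx1.ne']; field_simp
  rw [hxp, hx1p]
  nlinarith [Real.rpow_pos_of_pos hx1 (p - 1)]

theorem Real.sum_range_add_one_rpow_le {p : ℝ} (hp0 : 0 < p) (hp1 : p ≤ 1) (m : ℕ) :
    ∑ k ∈ range m, ((k : ℝ) + 1) ^ (p - 1) ≤ (m : ℝ) ^ p / p := by
  rw [le_div_iff₀ hp0, sum_mul]
  calc ∑ k ∈ range m, ((k : ℝ) + 1) ^ (p - 1) * p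
      ≤ ∑ k ∈ range m, ((((k + 1 : ℕ) : ℝ)) ^ p - ((k : ℕ) : ℝ) ^ p) := by
        gcongr with k
        push_cast
        linarith [Real.mul_rpow_sub_one_le_rpow_sub_rpow hp0.le hp1 k.cast_nonneg]
    _ = (m : ℝ) ^ p := by
        rw [sum_range_sub (fun k : ℕ => (k : ℝ) ^ p)]; simp [Real.zero_rpow hp0.ne']

theorem sum_range_rpow_div_one_add_abs_sq_sub_le {σ β : ℝ} (hσ : 0 ≤ σ) (hβ0 : 0 ≤ β)
    (hβ1 : β < 1) (c : ℤ) (L : ℕ) :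
    ∑ n ∈ range L, (n : ℝ) ^ (2 * σ) / (1 + |(n : ℝ) ^ 2 - c|) ^ β ≤
      2 / (1 - β) * (L : ℝ) ^ (2 * σ + (1 - β)) := by
  set h : ℕ → ℝ := fun k => ((k : ℝ) + 1) ^ ((1 - β) - 1)
  have hh : Antitone h := fun j k hjk =>
    Real.rpow_le_rpow_of_nonpos (by positivity) (by gcongr) (by linarith)
  have hsq : Set.InjOn (fun n : ℕ => (n : ℤ) ^ 2) (range L) := fun a _ b _ hab => by
    simpa using hab
  have hterm : ∀ n ∈ range L, (n : ℝ) ^ (2 * σ) / (1 + |(n : ℝ) ^ 2 - c|) ^ β ≤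
      (L : ℝ) ^ (2 * σ) * h ((n : ℤ) ^ 2 - c).natAbs := by
    intro n hn
    have habs : |(n : ℝ) ^ 2 - c| = (((n : ℤ) ^ 2 - c).natAbs : ℝ) := by
      rw [Nat.cast_natAbs]; push_cast; rfl
    rw [div_eq_mul_inv, habs, ← Real.rpow_neg (by positivity), add_comm]
    simp only [h, show (1 - β) - 1 = -β by ring]
    gcongr
    exact_mod_cast (mem_range.1 hn).le
  calc ∑ n ∈ range L, (n : ℝ) ^ (2 * σ) / (1 + |(n : ℝ) ^ 2 - c|) ^ β
      ≤ ∑ n ∈ range L, (L : ℝ) ^ (2 * σ) * h ((n : ℤ) ^ 2 - c).natAbs := sum_le_sum hterm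
    _ = (L : ℝ) ^ (2 * σ) * ∑ n ∈ range L, h ((n : ℤ) ^ 2 - c).natAbs := (mul_sum ..).symm
    _ ≤ (L : ℝ) ^ (2 * σ) * (2 * ((L : ℝ) ^ (1 - β) / (1 - β))) := by
        gcongr
        calc ∑ n ∈ range L, h ((n : ℤ) ^ 2 - c).natAbs ≤ 2 • ∑ k ∈ range #(range L), h k :=
              sum_natAbs_sub_le_two_nsmul hh (fun k => by positivity) hsq c
          _ ≤ 2 * ((L : ℝ) ^ (1 - β) / (1 - β)) := by
              rw [card_range, two_nsmul, ← two_mul]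
              gcongr
              exact Real.sum_range_add_one_rpow_le (by linarith) (by linarith) L
    _ = 2 / (1 - β) * (L : ℝ) ^ (2 * σ + (1 - β)) := by
        rw [Real.rpow_add' L.cast_nonneg (by linarith)]; ring

theorem rpow_div_one_add_abs_sq_sub_le_of_two_mul_abs_le {σ β c x : ℝ} (hβ0 : 0 ≤ β)
    (hβ1 : β ≤ 1) (hx : 0 < x) (hc : 2 * |c| ≤ x ^ 2) :
    x ^ (2 * σ) / (1 + |x ^ 2 - c|) ^ β ≤ 2 * x ^ (2 * σ - 2 * β) := by
  have hlow : x ^ 2 / 2 ≤ 1 + |x ^ 2 - c| := by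
    linarith [le_abs_self c, le_abs_self (x ^ 2 - c)]
  have hpow : x ^ (2 * β) / 2 ≤ (x ^ 2 / 2) ^ β := by
    rw [Real.div_rpow (by positivity) zero_le_two, ← Real.rpow_natCast_mul hx.le]
    push_cast
    gcongr
    exact Real.rpow_le_self_of_one_le one_le_two hβ1
  calc x ^ (2 * σ) / (1 + |x ^ 2 - c|) ^ β ≤ x ^ (2 * σ) / (x ^ (2 * β) / 2) := by
        gcongr
        exact hpow.trans (by gcongr)
    _ = 2 * x ^ (2 * σ - 2 * β) := by
        rw [Real.rpow_sub hx]; field_simp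

theorem floor_sqrt_two_mul_add_one_sq_le {a : ℝ} (ha : 0 ≤ a) :
    ((⌊√(2 * a)⌋₊ + 1 : ℕ) : ℝ) ^ 2 ≤ 4 * (1 + a) := by
  have hfloor : ((⌊√(2 * a)⌋₊ + 1 : ℕ) : ℝ) ≤ √(2 * a) + 1 := by
    push_cast; gcongr; exact Nat.floor_le (Real.sqrt_nonneg _)
  have hsq := Real.sq_sqrt (by positivity : 0 ≤ 2 * a)
  nlinarith [pow_le_pow_left₀ (Nat.cast_nonneg _) hfloor 2, sq_nonneg (√(2 * a) - 1)]

theorem exists_tsum_rpow_div_one_add_abs_sq_sub_le {σ β : ℝ} (hσ : 0 ≤ σ) (hσβ : σ + 1 / 2 < β)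
    (hβ : β < 1) : ∃ C, 0 ≤ C ∧ ∀ c : ℤ,
      Summable (fun n : ℕ => (n : ℝ) ^ (2 * σ) / (1 + |(n : ℝ) ^ 2 - c|) ^ β) ∧
      ∑' n : ℕ, (n : ℝ) ^ (2 * σ) / (1 + |(n : ℝ) ^ 2 - c|) ^ β ≤
        C * (1 + |(c : ℝ)|) ^ (σ + (1 - β) / 2) := by
  set δ := σ + (1 - β) / 2
  set g : ℕ → ℝ := fun n => 2 * (n : ℝ) ^ (2 * σ - 2 * β)
  have hg : Summable g := (Real.summable_nat_rpow.2 (by linarith)).mul_left 2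
  have hg0 : ∀ n, 0 ≤ g n := fun n => by positivity
  refine ⟨2 / (1 - β) * 4 ^ δ + ∑' n, g n,
    add_nonneg (mul_nonneg (div_nonneg zero_le_two (by linarith)) (by positivity))
      (tsum_nonneg hg0), fun c => ?_⟩
  set F : ℕ → ℝ := fun n => (n : ℝ) ^ (2 * σ) / (1 + |(n : ℝ) ^ 2 - c|) ^ β
  set R := 1 + |(c : ℝ)|
  set L := ⌊√(2 * |(c : ℝ)|)⌋₊ + 1
  have hfar : ∀ n, F (n + L) ≤ g (n + L) := fun n => by
    have hlt : √(2 * |(c : ℝ)|) < ((n + L : ℕ) : ℝ) := by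
      push_cast [L]; linarith [Nat.lt_floor_add_one (√(2 * |(c : ℝ)|)), n.cast_nonneg (α := ℝ)]
    refine rpow_div_one_add_abs_sq_sub_le_of_two_mul_abs_le (by linarith) hβ.le
      ((Real.sqrt_nonneg _).trans_lt hlt) ?_
    exact (Real.sqrt_lt' ((Real.sqrt_nonneg _).trans_lt hlt)).1 hlt |>.le
  have hF : Summable F := (summable_nat_add_iff L).1 <|
    hg.comp_injective (add_left_injective L) |>.of_nonneg_of_le (fun n => by positivity) hfar
  refine ⟨hF, ?_⟩
  have hnear : ∑ n ∈ range L, F n ≤ 2 / (1 - β) * 4 ^ δ * R ^ δ := by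
    refine (sum_range_rpow_div_one_add_abs_sq_sub_le hσ (by linarith) hβ c L).trans ?_
    rw [show 2 * σ + (1 - β) = ((2 : ℕ) : ℝ) * δ by push_cast; ring,
      Real.rpow_natCast_mul L.cast_nonneg, mul_assoc, ← Real.mul_rpow (by norm_num) (by positivity)]
    gcongr
    exact floor_sqrt_two_mul_add_one_sq_le (abs_nonneg _)
  have htail : ∑' n, F (n + L) ≤ ∑' n, g n :=
    ((hF.comp_injective (add_left_injective L)).tsum_le_tsum hfar
      (hg.comp_injective (add_left_injective L))).trans
      (tsum_comp_le_tsum_of_inj hg hg0 (add_left_injective L))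
  have hR : 1 ≤ R ^ δ := Real.one_le_rpow (by simp [R]) (by simp only [δ]; linarith)
  rw [← hF.sum_add_tsum_nat_add L]
  nlinarith [mul_le_mul_of_nonneg_left hR (tsum_nonneg hg0 : 0 ≤ ∑' n, g n)]

theorem min_sq_mul_max_le_mul {x y z : ℝ} (hx : 0 ≤ x) (hy : 0 ≤ y) (hz : 0 ≤ z) :
    min x (min y z) ^ 2 * max x (max y z) ≤ x * y * z := by
  simp only [min_def, max_def]
  split_ifs <;> nlinarith [mul_nonneg hx hy, mul_nonneg hy hz, mul_nonneg hx hz]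

theorem one_add_abs_rpow_mul_min_sq_div_le {x y z δ : ℝ} (hx : 1 ≤ x) (hy : 1 ≤ y) (hz : 1 ≤ z)
    (hδ0 : 0 ≤ δ) (hδ : δ ≤ 1 / 2) :
    (1 + |x ^ 2 - y ^ 2 + z ^ 2|) ^ δ * (min x (min y z) ^ 2 / (x * y * z) ^ 2) ≤
      3 * (x * y * z) ^ ((2 * δ - 4) / 3) := by
  set M := max x (max y z)
  set P := x * y * z
  have hxM : x ≤ M := le_max_left _ _
  have hyM : y ≤ M := (le_max_left _ _).trans (le_max_right _ _)
  have hzM : z ≤ M := (le_max_right _ _).trans (le_max_right _ _)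
  have hM : 0 < M := by linarith
  have hP : 0 < P := by positivity
  have hPM : P ≤ M ^ 3 := by
    calc x * y * z ≤ M * M * M := by gcongr
      _ = M ^ 3 := by ring
  have hD : (1 + |x ^ 2 - y ^ 2 + z ^ 2|) ^ δ ≤ 3 * M ^ (2 * δ) := by
    have hle : 1 + |x ^ 2 - y ^ 2 + z ^ 2| ≤ 3 * M ^ 2 := by
      have := abs_le.2 (⟨by nlinarith, by nlinarith⟩ : -(2 * M ^ 2) ≤ x ^ 2 - y ^ 2 + z ^ 2 ∧
        x ^ 2 - y ^ 2 + z ^ 2 ≤ 2 * M ^ 2)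
      nlinarith
    calc (1 + |x ^ 2 - y ^ 2 + z ^ 2|) ^ δ ≤ (3 * M ^ 2) ^ δ := by gcongr
      _ = 3 ^ δ * M ^ (2 * δ) := by
        rw [Real.mul_rpow (by norm_num) (by positivity), ← Real.rpow_natCast_mul hM.le]; norm_num
      _ ≤ 3 * M ^ (2 * δ) := by
        gcongr; exact Real.rpow_le_self_of_one_le (by norm_num) (by linarith)
  have hm : min x (min y z) ^ 2 / P ^ 2 ≤ M⁻¹ * P⁻¹ := by
    rw [div_le_iff₀ (by positivity), show M⁻¹ * P⁻¹ * P ^ 2 = P / M by field_simp,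
      le_div_iff₀ hM]
    exact min_sq_mul_max_le_mul (by linarith) (by linarith) (by linarith)
  have hMP : M ^ (2 * δ - 1) ≤ P ^ ((2 * δ - 1) / 3) := by
    calc M ^ (2 * δ - 1) = (M ^ 3) ^ ((2 * δ - 1) / 3) := by
          rw [← Real.rpow_natCast_mul hM.le]; ring_nf
      _ ≤ P ^ ((2 * δ - 1) / 3) := Real.rpow_le_rpow_of_nonpos hP hPM (by linarith)
  calc (1 + |x ^ 2 - y ^ 2 + z ^ 2|) ^ δ * (min x (min y z) ^ 2 / P ^ 2)
      ≤ 3 * M ^ (2 * δ) * (M⁻¹ * P⁻¹) := by gcongr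
    _ = 3 * (M ^ (2 * δ - 1) * P⁻¹) := by rw [Real.rpow_sub_one hM.ne']; ring
    _ ≤ 3 * (P ^ ((2 * δ - 1) / 3) * P⁻¹) := by gcongr
    _ = 3 * P ^ ((2 * δ - 4) / 3) := by
        rw [← Real.rpow_neg_one, ← Real.rpow_add hP]; ring_nf

theorem PNat.summable_mul_mul_rpow {e : ℝ} (he : e < -1) :
    Summable (fun t : ℕ+ × ℕ+ × ℕ+ => ((t.1 : ℝ) * t.2.1 * t.2.2) ^ e) := by
  have h : Summable (fun a : ℕ+ => (a : ℝ) ^ e) :=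
    (Real.summable_nat_rpow.2 he).comp_injective PNat.coe_injective
  have h0 : 0 ≤ fun a : ℕ+ => (a : ℝ) ^ e := fun a => by positivity
  refine (h.mul_of_nonneg (h.mul_of_nonneg h h0 h0) h0 fun _ => by positivity).congr fun t => ?_
  simp only [Real.mul_rpow, mul_assoc, mul_nonneg, Nat.cast_nonneg]

theorem summable_of_nonneg_of_tsum_fst_le {α β : Type*} {f : α × β → ℝ} {g : β → ℝ} (hf : 0 ≤ f)
    (hfs : ∀ b, Summable fun a => f (a, b)) (hle : ∀ b, ∑' a, f (a, b) ≤ g b)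
    (hg : Summable g) : Summable f := by
  rw [← (Equiv.prodComm β α).summable_iff]
  exact (summable_prod_of_nonneg (f := f ∘ Equiv.prodComm β α) fun _ => hf _).2
    ⟨hfs, hg.of_nonneg_of_le (fun b => tsum_nonneg fun a => hf (a, b)) hle⟩

theorem summable_quadruple_sum_of_add_half_lt {σ β : ℝ} (hσ : 0 ≤ σ) (hσβ : σ + 1 / 2 < β)
    (hβ : β < 1) :
    Summable (fun q : ℕ+ × ℕ+ × ℕ+ × ℕ+ =>
      (q.1 : ℝ) ^ (2 * σ) * (min (q.2.1 : ℝ) (min (q.2.2.1 : ℝ) (q.2.2.2 : ℝ))) ^ 2 /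
        ((1 + |(q.1 : ℝ) ^ 2 - (q.2.1 : ℝ) ^ 2 + (q.2.2.1 : ℝ) ^ 2 - (q.2.2.2 : ℝ) ^ 2|) ^ β *
          ((q.2.1 : ℝ) * (q.2.2.1 : ℝ) * (q.2.2.2 : ℝ)) ^ 2)) := by
  obtain ⟨C, hC0, hC⟩ := exists_tsum_rpow_div_one_add_abs_sq_sub_le hσ hσβ hβ
  have hδ0 : 0 ≤ σ + (1 - β) / 2 := by linarith
  have hδ : σ + (1 - β) / 2 < 1 / 2 := by linarith
  set δ := σ + (1 - β) / 2
  set c : ℕ+ × ℕ+ × ℕ+ → ℤ := fun t => (t.1 : ℤ) ^ 2 - (t.2.1 : ℤ) ^ 2 + (t.2.2 : ℤ) ^ 2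
  set w : ℕ+ × ℕ+ × ℕ+ → ℝ := fun t =>
    min (t.1 : ℝ) (min (t.2.1 : ℝ) (t.2.2 : ℝ)) ^ 2 / ((t.1 : ℝ) * t.2.1 * t.2.2) ^ 2
  have hsplit : ∀ (n : ℕ+) (t : ℕ+ × ℕ+ × ℕ+), (n : ℝ) ^ (2 * σ) *
      (min (t.1 : ℝ) (min (t.2.1 : ℝ) (t.2.2 : ℝ))) ^ 2 /
        ((1 + |(n : ℝ) ^ 2 - (t.1 : ℝ) ^ 2 + (t.2.1 : ℝ) ^ 2 - (t.2.2 : ℝ) ^ 2|) ^ β *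
          ((t.1 : ℝ) * (t.2.1 : ℝ) * (t.2.2 : ℝ)) ^ 2) =
      (n : ℝ) ^ (2 * σ) / (1 + |(n : ℝ) ^ 2 - c t|) ^ β * w t := by
    intro n t
    rw [mul_div_mul_comm]
    push_cast [c, w]
    ring_nf
  simp only [hsplit]
  refine summable_of_nonneg_of_tsum_fst_le (fun _ => by positivity)
    (fun t => ((hC (c t)).1.comp_injective PNat.coe_injective).mul_right (w t)) (fun t => ?_)
    ((PNat.summable_mul_mul_rpow (e := (2 * δ - 4) / 3) (by linarith)).mul_left (3 * C))
  dsimp only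
  rw [tsum_mul_right]
  calc (∑' n : ℕ+, (n : ℝ) ^ (2 * σ) / (1 + |(n : ℝ) ^ 2 - c t|) ^ β) * w t
      ≤ C * (1 + |(c t : ℝ)|) ^ δ * w t := by
        gcongr
        exact (tsum_comp_le_tsum_of_inj (hC (c t)).1 (fun n => by positivity)
          PNat.coe_injective).trans (hC (c t)).2
    _ = C * ((1 + |(c t : ℝ)|) ^ δ * w t) := by ring
    _ ≤ C * (3 * ((t.1 : ℝ) * t.2.1 * t.2.2) ^ ((2 * δ - 4) / 3)) := by
        refine mul_le_mul_of_nonneg_left ?_ hC0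
        push_cast [c, w]
        exact one_add_abs_rpow_mul_min_sq_div_le (Nat.one_le_cast.2 t.1.pos)
          (Nat.one_le_cast.2 t.2.1.pos) (Nat.one_le_cast.2 t.2.2.pos) hδ0 hδ.le
    _ = 3 * C * ((t.1 : ℝ) * t.2.1 * t.2.2) ^ ((2 * δ - 4) / 3) := by ring

/-- For every `σ ∈ (0, 1/2)` there exists `β ∈ (0, 1)` such that the quadruple sum
over positive integers
`∑_{n,n₁,n₂,n₃} n^{2σ} min(n₁,n₂,n₃)² / ((1 + |n² - n₁² + n₂² - n₃²|)^β (n₁ n₂ n₃)²)`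
is finite. -/
theorem stmt14 (σ : ℝ) (hσ0 : 0 < σ) (hσ : σ < 1/2) :
    ∃ β : ℝ, 0 < β ∧ β < 1 ∧
      Summable (fun q : ℕ+ × ℕ+ × ℕ+ × ℕ+ =>
        (q.1 : ℝ) ^ (2 * σ) *
          (min (q.2.1 : ℝ) (min (q.2.2.1 : ℝ) (q.2.2.2 : ℝ))) ^ 2 /
            ((1 + |(q.1 : ℝ) ^ 2 - (q.2.1 : ℝ) ^ 2 + (q.2.2.1 : ℝ) ^ 2
                - (q.2.2.2 : ℝ) ^ 2|) ^ β *
              ((q.2.1 : ℝ) * (q.2.2.1 : ℝ) * (q.2.2.2 : ℝ)) ^ 2)) :=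
  ⟨3 / 4 + σ / 2, by linarith, by linarith,
    summable_quadruple_sum_of_add_half_lt hσ0.le (by linarith) (by linarith)⟩
end
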